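/- arXiv:2210.09979 — 5 statements merged into one kernel-verified Lean document; each statement's English description precedes it below -/
import Mathlib

section
/- For a positive integer d and any partition a_1 + a_2 + ... + a_p = d with p ≥ 2 and each a_i ≥ 1, one has (d - a_1)·(d - a_2)·...·(d - a_p) ≥ (d - 1)·d^(p-2). -/
/-!
Merging two parts `a`, `b` into one part `a + b` can only decrease the product, up to a factor
`d`: `(d - a) * (d - b) - d * (d - (a + b)) = a * b ≥ 0`. Merging all parts but `a₀` into one
therefore gives `d * ∏ (d - aᵢ) ≥ d ^ (p - 1) * (d - a₀) * a₀`, and `(d - a₀) * a₀ ≥ d - 1`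
because both factors are at least `1`.
-/

theorem Nat.mul_sub_add_le_sub_mul_sub (d a b : ℕ) : d * (d - (a + b)) ≤ (d - a) * (d - b) := by
  rcases le_or_gt d (a + b) with h | h
  · simp [Nat.sub_eq_zero_of_le h]
  · zify [h.le, h.le.trans' (Nat.le_add_right a b), h.le.trans' (Nat.le_add_left b a)]
    nlinarith [mul_nonneg (Int.natCast_nonneg a) (Int.natCast_nonneg b)]

/-- Weierstrass' product inequality `1 - ∑ xᵢ ≤ ∏ (1 - xᵢ)` with `xᵢ = f i / d`, cleared of
denominators; truncated subtraction makes it hold without assuming `f i ≤ d`. -/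
theorem Finset.pow_card_mul_sub_sum_le_mul_prod_sub {ι : Type*} (s : Finset ι) (d : ℕ)
    (f : ι → ℕ) : d ^ s.card * (d - ∑ i ∈ s, f i) ≤ d * ∏ i ∈ s, (d - f i) := by
  induction s using Finset.cons_induction with
  | empty => simp
  | cons j s _ ih =>
    rw [card_cons, sum_cons, prod_cons]
    calc d ^ (s.card + 1) * (d - (f j + ∑ i ∈ s, f i))
        = d ^ s.card * (d * (d - (f j + ∑ i ∈ s, f i))) := by ring
      _ ≤ d ^ s.card * ((d - f j) * (d - ∑ i ∈ s, f i)) :=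
          Nat.mul_le_mul_left _ (Nat.mul_sub_add_le_sub_mul_sub d _ _)
      _ = (d - f j) * (d ^ s.card * (d - ∑ i ∈ s, f i)) := by ring
      _ ≤ (d - f j) * (d * ∏ i ∈ s, (d - f i)) := Nat.mul_le_mul_left _ ih
      _ = d * ((d - f j) * ∏ i ∈ s, (d - f i)) := by ring

/-- For a positive integer `d` and any partition `a 0 + ... + a (p-1) = d`
with `p ≥ 2` and each `a i ≥ 1`, one has
`(d - 1) * d^(p-2) ≤ ∏ i, (d - a i)`. -/
theorem partition_product_lower_bound_full
    (d p : ℕ) (hd : 0 < d) (hp : 2 ≤ p)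
    (a : Fin p → ℕ) (ha : ∀ i, 1 ≤ a i) (hsum : ∑ i, a i = d) :
    (d - 1) * d ^ (p - 2) ≤ ∏ i, (d - a i) := by
  obtain ⟨q, rfl⟩ : ∃ q, p = q + 2 := ⟨p - 2, by omega⟩
  let i₀ : Fin (q + 2) := 0
  let rest := Finset.univ.erase i₀
  have hcard : rest.card = q + 1 := by simp [rest]
  have hsplit : a i₀ + ∑ i ∈ rest, a i = d := by
    rw [Finset.add_sum_erase _ _ (Finset.mem_univ i₀), hsum]
  have hrest_pos : 1 ≤ ∑ i ∈ rest, a i := by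
    calc 1 ≤ rest.card • 1 := by simp [hcard]
      _ ≤ ∑ i ∈ rest, a i := rest.card_nsmul_le_sum a 1 fun i _ ↦ ha i
  refine Nat.le_of_mul_le_mul_left ?_ hd
  calc d * ((d - 1) * d ^ (q + 2 - 2)) = (a i₀ + (d - a i₀) - 1) * d ^ (q + 1) := by
        rw [Nat.add_sub_cancel' (by omega), Nat.add_sub_cancel]; ring
    _ ≤ a i₀ * (d - a i₀) * d ^ (q + 1) :=
        Nat.mul_le_mul_right _ (Nat.add_sub_one_le_mul (by have := ha i₀; omega) (by omega))
    _ = (d - a i₀) * (d ^ rest.card * (d - ∑ i ∈ rest, a i)) := by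
        rw [hcard, show d - ∑ i ∈ rest, a i = a i₀ by omega]; ring
    _ ≤ (d - a i₀) * (d * ∏ i ∈ rest, (d - a i)) :=
        Nat.mul_le_mul_left _ (rest.pow_card_mul_sub_sum_le_mul_prod_sub d a)
    _ = d * ∏ i, (d - a i) := by
        rw [← Finset.mul_prod_erase _ _ (Finset.mem_univ i₀)]; ring
end

section
/- Let Θ = {θ_1, ..., θ_K} ⊂ (0,1)^d where θ_k = (t_k^(1), ..., t_k^(d)). For each function f : [K] → [d] (assigning each index k a coordinate), suppose there exist continuous nonnegative functions q_{f,i} : [0,1] → ℝ (for i ∈ [d]) such that q_{f,i} vanishes exactly on {t_k^(i) : f(k) = i}. Then Q(t_1,...,t_d) := Σ over all ordered partitions π = (Ω_1,...,Ω_d) of [K] into d (possibly empty) parts of the products q_{π,1}(t_1)·...·q_{π,d}(t_d) is nonnegative on [0,1]^d and vanishes exactly on Θ. -/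
/-!
Every term of `Q` is nonnegative, so `Q t = 0` iff for every assignment `f` some factor
`q f i (t i)` vanishes, i.e. iff every `f` has an index `k` with `θ k (f k) = t (f k)`.
If `t` were none of the `θ k`, choosing for each `k` a coordinate where `θ k` and `t` differ
would give an assignment violating this.
-/

theorem forall_exists_apply_iff_exists_forall {α β : Sort*} (P : α → β → Prop) :
    (∀ f : α → β, ∃ a, P a (f a)) ↔ ∃ a, ∀ b, P a b := by
  refine ⟨fun h => ?_, fun ⟨a, ha⟩ f => ⟨a, ha (f a)⟩⟩
  by_contra! hne
  choose f hf using hne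
  obtain ⟨a, ha⟩ := h f
  exact hf a ha

theorem Fintype.sum_prod_eq_zero_iff_of_nonneg {κ ι R : Type*} [Fintype κ] [Fintype ι]
    [CommSemiring R] [PartialOrder R] [IsOrderedAddMonoid R] [NoZeroDivisors R] [Nontrivial R]
    (g : κ → ι → R) (hg : ∀ f, 0 ≤ ∏ i, g f i) :
    ∑ f, ∏ i, g f i = 0 ↔ ∀ f, ∃ i, g f i = 0 := by
  simp [Fintype.sum_eq_zero_iff_of_nonneg (f := fun f => ∏ i, g f i) hg, funext_iff,
    Finset.prod_eq_zero_iff]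

theorem sum_over_partitions_dual_certificate_general
    {K d : ℕ} (θ : Fin K → Fin d → ℝ)
    (q : (Fin K → Fin d) → Fin d → ℝ → ℝ)
    (hq0 : ∀ f i, ∀ t ∈ Set.Icc (0 : ℝ) 1, 0 ≤ q f i t)
    (hqv : ∀ f i, ∀ t ∈ Set.Icc (0 : ℝ) 1,
      (q f i t = 0 ↔ ∃ k, f k = i ∧ θ k i = t)) :
    ∀ t : Fin d → ℝ, (∀ i, t i ∈ Set.Icc (0 : ℝ) 1) →
      (0 ≤ ∑ f : Fin K → Fin d, ∏ i, q f i (t i)) ∧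
      ((∑ f : Fin K → Fin d, ∏ i, q f i (t i)) = 0 ↔ ∃ k, t = θ k) := by
  intro t ht
  have hterm : ∀ f : Fin K → Fin d, 0 ≤ ∏ i, q f i (t i) := fun f =>
    Finset.prod_nonneg fun i _ => hq0 f i (t i) (ht i)
  refine ⟨Finset.sum_nonneg fun f _ => hterm f, ?_⟩
  have hvanish (f : Fin K → Fin d) : (∃ i, q f i (t i) = 0) ↔ ∃ k, θ k (f k) = t (f k) := by
    simp only [hqv f _ (t _) (ht _)]
    rw [exists_comm]
    simp only [exists_eq_left']
  simp only [Fintype.sum_prod_eq_zero_iff_of_nonneg _ hterm, hvanish,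
    forall_exists_apply_iff_exists_forall (fun k i => θ k i = t i), funext_iff, eq_comm]

/-- Let `Θ = {θ_1, ..., θ_K} ⊂ (0,1)^d` be distinct points. For each ordered
partition `f : [K] → [d]` suppose there are continuous nonnegative functions
`q f i : [0,1] → ℝ` vanishing exactly on `{t_k^(i) : f k = i}`. Then
`Q t = Σ_f ∏_i (q f i) (t i)` is nonnegative on `[0,1]^d` and vanishes exactly
on `Θ`. -/
theorem sum_over_partitions_dual_certificate
    {K d : ℕ} (θ : Fin K → Fin d → ℝ) (hθdist : Function.Injective θ)
    (hθint : ∀ k i, θ k i ∈ Set.Ioo (0 : ℝ) 1)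
    (q : (Fin K → Fin d) → Fin d → ℝ → ℝ)
    (hqc : ∀ f i, ContinuousOn (q f i) (Set.Icc (0 : ℝ) 1))
    (hq0 : ∀ f i, ∀ t ∈ Set.Icc (0 : ℝ) 1, 0 ≤ q f i t)
    (hqv : ∀ f i, ∀ t ∈ Set.Icc (0 : ℝ) 1,
      (q f i t = 0 ↔ ∃ k, f k = i ∧ θ k i = t)) :
    ∀ t : Fin d → ℝ, (∀ i, t i ∈ Set.Icc (0 : ℝ) 1) →
      (0 ≤ ∑ f : Fin K → Fin d, ∏ i, q f i (t i)) ∧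
      ((∑ f : Fin K → Fin d, ∏ i, q f i (t i)) = 0 ↔ ∃ k, t = θ k) :=
  sum_over_partitions_dual_certificate_general θ q hq0 hqv
end

section
/- The generalized Wasserstein distance d_GW(μ₁, μ₂) = inf{‖μ₁ − z₁‖_TV + W₁(z₁, z₂) + ‖μ₂ − z₂‖_TV : z₁, z₂ ≥ 0, z₁(X) = z₂(X)} satisfies the triangle inequality: d_GW(μ₁, μ₃) ≤ d_GW(μ₁, μ₂) + d_GW(μ₂, μ₃) for all finite nonnegative Borel measures μ₁, μ₂, μ₃ on a compact metric space X. -/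
/-
Take transport plans `γ₁` from `z₁` to `z₂` and `γ₂` from `w₁` to `w₂`, and let `m = z₂ ⊓ w₁`, so
that `z₂ = (z₂ - w₁) + m` and `w₁ = (w₁ - z₂) + m`. Disintegrating both plans along their middle
marginals and gluing the conditional laws over `m` gives a plan `η` whose marginals lie below `z₁`
and `w₂` and whose cost is at most that of `γ₁` plus that of `γ₂`, by the triangle inequality of
the metric. Replacing `z₁` and `w₂` by the marginals of `η` costs at most the lost masses
`(z₂ - w₁)(X)` and `(w₁ - z₂)(X)` in total variation, and these add up to
`‖z₂ - w₁‖_TV ≤ ‖μ₂ - z₂‖_TV + ‖μ₂ - w₁‖_TV`. Taking infima over `z`, `w`, `γ₁`, `γ₂` gives the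
claim; witnesses of finite cost are automatically finite measures.
-/
open MeasureTheory ENNReal

/-- Total variation distance `‖μ − ν‖_TV` of two (finite) nonnegative measures,
via the Jordan-type decomposition `(μ − ν)(X) + (ν − μ)(X)` using truncated
subtraction of measures. -/
noncomputable def tvDist {X : Type*} [MeasurableSpace X] (μ ν : Measure X) : ℝ≥0∞ :=
  (μ - ν) Set.univ + (ν - μ) Set.univ

/-- The 1-Wasserstein distance between nonnegative measures, as the infimum of
`∫ dist` over couplings (it is `∞` if no coupling exists). -/
noncomputable def W1 {X : Type*} [MeasurableSpace X] [PseudoEMetricSpace X]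
    (μ ν : Measure X) : ℝ≥0∞ :=
  ⨅ (γ : Measure (X × X)) (_ : γ.map Prod.fst = μ ∧ γ.map Prod.snd = ν),
    ∫⁻ p, edist p.1 p.2 ∂γ

/-- The generalized Wasserstein distance
`d_GW(μ, ν) = inf {‖μ − z₁‖_TV + W₁(z₁, z₂) + ‖ν − z₂‖_TV}` over nonnegative
measures `z₁, z₂` of equal total mass. -/
noncomputable def dGW {X : Type*} [MeasurableSpace X] [PseudoEMetricSpace X]
    (μ ν : Measure X) : ℝ≥0∞ :=
  ⨅ (z₁ : Measure X) (z₂ : Measure X) (_ : z₁ Set.univ = z₂ Set.univ),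
    tvDist μ z₁ + W1 z₁ z₂ + tvDist ν z₂

namespace MeasureTheory.Measure

section Subtraction

variable {α : Type*} [MeasurableSpace α] {μ ν ρ : Measure α} {s : Set α}

lemma sub_add_restrict_add_restrict_compl [IsFiniteMeasure ν] (hs : IsHahnDecomposition ν μ s) :
    μ - ν + (ν.restrict s + μ.restrict sᶜ) = μ := by
  have hsc : (μ - ν).restrict sᶜ = 0 :=
    restrict_eq_zero.2 (sub_apply_eq_zero_of_isHahnDecomposition hs.compl)
  calc μ - ν + (ν.restrict s + μ.restrict sᶜ)
      = ((μ - ν).restrict s + ν.restrict s) + μ.restrict sᶜ := by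
        nth_rewrite 1 [← restrict_add_restrict_compl (μ := μ - ν) hs.measurableSet]
        rw [hsc, add_zero, add_assoc]
    _ = μ := by
        rw [restrict_sub_eq_restrict_sub_restrict hs.measurableSet,
          sub_add_cancel_of_le hs.le_on, restrict_add_restrict_compl hs.measurableSet]

lemma exists_sub_add_eq_and_sub_add_eq (μ ν : Measure α) [IsFiniteMeasure μ]
    [IsFiniteMeasure ν] : ∃ m : Measure α, μ - ν + m = μ ∧ ν - μ + m = ν := by
  obtain ⟨s, hs⟩ := exists_isHahnDecomposition ν μ
  refine ⟨ν.restrict s + μ.restrict sᶜ, sub_add_restrict_add_restrict_compl hs, ?_⟩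
  simpa [add_comm] using sub_add_restrict_add_restrict_compl hs.compl

lemma le_sub_add (μ ν : Measure α) [IsFiniteMeasure μ] [IsFiniteMeasure ν] : μ ≤ μ - ν + ν := by
  obtain ⟨m, hμ, hν⟩ := exists_sub_add_eq_and_sub_add_eq μ ν
  calc μ = μ - ν + m := hμ.symm
    _ ≤ μ - ν + ν := by
      gcongr
      exact hν ▸ Measure.le_add_left le_rfl

lemma sub_le_sub_add_sub (μ ν ρ : Measure α) [IsFiniteMeasure μ] [IsFiniteMeasure ν]
    [IsFiniteMeasure ρ] : μ - ρ ≤ μ - ν + (ν - ρ) :=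
  sub_le_of_le_add <| calc
    μ ≤ μ - ν + ν := le_sub_add μ ν
    _ ≤ μ - ν + (ν - ρ + ρ) := by gcongr; exact le_sub_add ν ρ
    _ = μ - ν + (ν - ρ) + ρ := (add_assoc _ _ _).symm

lemma le_sub_apply_add_of_ne_top [IsFiniteMeasure ν] (hs : MeasurableSet s) (hρs : ρ s ≠ ∞) :
    ρ s ≤ (ρ - ν) s + ν s := by
  have : IsFiniteMeasure (ρ.restrict s) := isFiniteMeasure_restrict.2 hρs
  simpa [← restrict_sub_eq_restrict_sub_restrict hs] using
    le_sub_add (ρ.restrict s) (ν.restrict s) .univ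

lemma smul_top_restrict_le_sub [IsFiniteMeasure ν] {u : Set α} (hu : MeasurableSet u)
    (hρu : ∀ t, MeasurableSet t → t ⊆ u → ρ t = 0 ∨ ρ t = ∞) :
    (∞ : ℝ≥0∞) • ρ.restrict u ≤ ρ - ν := by
  refine le_sInf fun d (hd : ρ ≤ d + ν) ↦ Measure.le_iff.2 fun t ht ↦ ?_
  rw [smul_apply, restrict_apply ht, smul_eq_mul]
  rcases hρu (t ∩ u) (ht.inter hu) Set.inter_subset_right with h0 | htop
  · simp [h0]
  · have : d (t ∩ u) = ∞ := by simpa [htop, measure_ne_top ν] using hd (t ∩ u)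
    simp [measure_mono_top Set.inter_subset_left this]

lemma isFiniteMeasure_of_sub_apply_univ_ne_top [IsFiniteMeasure ν] (h : (ρ - ν) .univ ≠ ∞) :
    IsFiniteMeasure ρ := by
  have : IsFiniteMeasure (ρ - ν) := ⟨h.lt_top⟩
  -- `ρ` is σ-finite on `A`; on `Aᶜ` it takes only the values `0` and `∞`, so that
  -- `∞ • ρ.restrict Aᶜ ≤ ρ - ν` forces `ρ Aᶜ = 0`.
  set A := ρ.sigmaFiniteSetWRT' (ρ - ν + ν)
  have hA : MeasurableSet A := measurableSet_sigmaFiniteSetWRT'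
  have hAc : ρ Aᶜ = 0 := by
    have hpure : ∀ t, MeasurableSet t → t ⊆ Aᶜ → ρ t = 0 ∨ ρ t = ∞ := by
      refine fun t ht htA ↦ or_iff_not_imp_right.2 fun hρt ↦ ?_
      have h0 : (ρ - ν + ν) t = 0 := by
        by_contra h0
        exact hρt (measure_eq_top_of_subset_compl_sigmaFiniteSetWRT' htA h0)
      exact le_antisymm (h0 ▸ le_sub_apply_add_of_ne_top ht hρt) zero_le
    by_contra hne
    simpa [ENNReal.top_mul hne] using smul_top_restrict_le_sub (ν := ν) hA.compl hpure .univ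
  have hAfin : ρ A ≤ (ρ - ν + ν) .univ := by
    have := sigmaFinite_restrict_sigmaFiniteSetWRT' ρ (ρ - ν + ν)
    rw [← restrict_apply_univ, ← iSup_restrict_spanningSets]
    refine iSup_le fun i ↦ ?_
    have hS := measurableSet_spanningSets (ρ.restrict A) i
    rw [restrict_apply_univ, restrict_apply hS]
    refine (le_sub_apply_add_of_ne_top (hS.inter hA) ?_).trans (measure_mono (Set.subset_univ _))
    rw [← restrict_apply hS]
    exact (measure_spanningSets_lt_top _ i).ne
  refine ⟨lt_of_le_of_lt ?_ (measure_lt_top (ρ - ν + ν) .univ)⟩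
  rw [← measure_add_measure_compl hA, hAc, add_zero]
  exact hAfin

end Subtraction

section Disintegration

open ProbabilityTheory

variable {α Ω : Type*} [MeasurableSpace α] [MeasurableSpace Ω] [StandardBorelSpace Ω] [Nonempty Ω]
  {ρ : Measure (α × Ω)} [IsFiniteMeasure ρ] {m : Measure α}

lemma compProd_condKernel_le (hm : m ≤ ρ.fst) : m ⊗ₘ ρ.condKernel ≤ ρ := by
  have : IsFiniteMeasure m := isFiniteMeasure_of_le _ hm
  calc m ⊗ₘ ρ.condKernel ≤ ρ.fst ⊗ₘ ρ.condKernel := Measure.le_iff.2 fun s hs ↦ by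
        rw [Measure.compProd_apply hs, Measure.compProd_apply hs]
        exact lintegral_mono' hm le_rfl
    _ = ρ := ρ.disintegrate ρ.condKernel

lemma condKernel_comp_le_snd (hm : m ≤ ρ.fst) : ρ.condKernel ∘ₘ m ≤ ρ.snd := by
  have : IsFiniteMeasure m := isFiniteMeasure_of_le _ hm
  rw [← Measure.snd_compProd]
  exact Measure.snd_mono (compProd_condKernel_le hm)

lemma lintegral_lintegral_condKernel_le (hm : m ≤ ρ.fst) {f : α × Ω → ℝ≥0∞}
    (hf : Measurable f) : ∫⁻ a, ∫⁻ ω, f (a, ω) ∂ρ.condKernel a ∂m ≤ ∫⁻ p, f p ∂ρ := by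
  have : IsFiniteMeasure m := isFiniteMeasure_of_le _ hm
  rw [← Measure.lintegral_compProd hf]
  exact lintegral_mono' (compProd_condKernel_le hm) le_rfl

end Disintegration

end MeasureTheory.Measure

section TotalVariation

variable {α : Type*} [MeasurableSpace α]

lemma tvDist_comm (μ ν : Measure α) : tvDist μ ν = tvDist ν μ := add_comm _ _

lemma tvDist_triangle (μ ν ρ : Measure α) [IsFiniteMeasure μ] [IsFiniteMeasure ν]
    [IsFiniteMeasure ρ] : tvDist μ ρ ≤ tvDist μ ν + tvDist ν ρ := by
  calc tvDist μ ρ ≤ (μ - ν + (ν - ρ)) .univ + (ρ - ν + (ν - μ)) .univ :=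
        add_le_add (Measure.sub_le_sub_add_sub μ ν ρ .univ) (Measure.sub_le_sub_add_sub ρ ν μ .univ)
    _ = tvDist μ ν + tvDist ν ρ := by simp only [tvDist, Measure.coe_add, Pi.add_apply]; ring

lemma tvDist_le_add_of_le (μ : Measure α) {ν ν' : Measure α} [IsFiniteMeasure μ]
    [IsFiniteMeasure ν] (h : ν' ≤ ν) : tvDist μ ν' ≤ tvDist μ ν + (ν .univ - ν' .univ) := by
  have : IsFiniteMeasure ν' := isFiniteMeasure_of_le ν h
  have h₁ : μ - ν' ≤ μ - ν + (ν - ν') := Measure.sub_le_sub_add_sub μ ν ν'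
  have h₂ : ν' - μ ≤ ν - μ := Measure.sub_le_of_le_add (h.trans (Measure.le_sub_add ν μ))
  calc tvDist μ ν' ≤ (μ - ν + (ν - ν')) .univ + (ν - μ) .univ := add_le_add (h₁ .univ) (h₂ .univ)
    _ = tvDist μ ν + (ν .univ - ν' .univ) := by
      rw [Measure.coe_add, Pi.add_apply, Measure.sub_apply .univ h, tvDist]; ring

lemma isFiniteMeasure_of_tvDist_ne_top {μ ν : Measure α} [IsFiniteMeasure μ]
    (h : tvDist μ ν ≠ ∞) : IsFiniteMeasure ν :=
  Measure.isFiniteMeasure_of_sub_apply_univ_ne_top (ν := μ) (ne_top_of_le_ne_top h le_add_self)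

end TotalVariation

section TransportCost

variable {X : Type*} [PseudoEMetricSpace X] [MeasurableSpace X]

noncomputable def transportCost (γ : Measure (X × X)) : ℝ≥0∞ := ∫⁻ p, edist p.1 p.2 ∂γ

lemma W1_fst_snd_le_transportCost (γ : Measure (X × X)) : W1 γ.fst γ.snd ≤ transportCost γ :=
  iInf₂_le γ ⟨rfl, rfl⟩

variable [OpensMeasurableSpace X]

lemma transportCost_le_lintegral_fst_add_snd (γ : Measure (X × X)) (x : X) :
    transportCost γ ≤ ∫⁻ y, edist x y ∂γ.fst + ∫⁻ y, edist x y ∂γ.snd := by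
  rw [Measure.fst, Measure.snd, lintegral_map (by fun_prop) measurable_fst,
    lintegral_map (by fun_prop) measurable_snd, ← lintegral_add_left (by fun_prop)]
  exact lintegral_mono fun p ↦ edist_triangle_left _ _ _

variable [SecondCountableTopology X]

lemma transportCost_map_swap (γ : Measure (X × X)) :
    transportCost (γ.map Prod.swap) = transportCost γ := by
  rw [transportCost, lintegral_map measurable_edist measurable_swap]
  simp_rw [Prod.fst_swap, Prod.snd_swap, edist_comm]
  rfl

open ProbabilityTheory in
lemma exists_glue_transportCost_le [StandardBorelSpace X] (γ₁ γ₂ : Measure (X × X))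
    [IsFiniteMeasure γ₁] [IsFiniteMeasure γ₂] {m : Measure X} (h₁ : m ≤ γ₁.snd) (h₂ : m ≤ γ₂.fst) :
    ∃ η : Measure (X × X), η.fst ≤ γ₁.fst ∧ η.snd ≤ γ₂.snd ∧ η .univ = m .univ ∧
      transportCost η ≤ transportCost γ₁ + transportCost γ₂ := by
  cases isEmpty_or_nonempty X
  -- `condKernel` is only available on a nonempty space.
  · exact ⟨0, by simp, by simp, by simp [Set.univ_eq_empty_iff.2 ‹_›], by simp [transportCost]⟩
  set ρ := γ₁.map Prod.swap
  have hρ : m ≤ ρ.fst := by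
    rwa [Measure.fst, Measure.map_map measurable_fst measurable_swap]
  set κ₁ := ρ.condKernel
  set κ₂ := γ₂.condKernel
  refine ⟨(κ₁ ×ₖ κ₂) ∘ₘ m, ?_, ?_, Measure.comp_apply_univ, ?_⟩
  · calc ((κ₁ ×ₖ κ₂) ∘ₘ m).fst = κ₁ ∘ₘ m := by
          rw [Measure.fst, Measure.map_comp _ _ measurable_fst, ← Kernel.fst_eq, Kernel.fst_prod]
      _ ≤ ρ.snd := Measure.condKernel_comp_le_snd hρ
      _ = γ₁.fst := by rw [Measure.snd, Measure.map_map measurable_snd measurable_swap]; rfl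
  · calc ((κ₁ ×ₖ κ₂) ∘ₘ m).snd = κ₂ ∘ₘ m := by
          rw [Measure.snd, Measure.map_comp _ _ measurable_snd, ← Kernel.snd_eq, Kernel.snd_prod]
      _ ≤ γ₂.snd := Measure.condKernel_comp_le_snd h₂
  · have hfst (x : X) : ((κ₁ ×ₖ κ₂) x).fst = κ₁ x := by
      rw [Measure.fst, ← Kernel.fst_apply, Kernel.fst_prod]
    have hsnd (x : X) : ((κ₁ ×ₖ κ₂) x).snd = κ₂ x := by
      rw [Measure.snd, ← Kernel.snd_apply, Kernel.snd_prod]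
    calc transportCost ((κ₁ ×ₖ κ₂) ∘ₘ m) = ∫⁻ x, transportCost ((κ₁ ×ₖ κ₂) x) ∂m :=
          Measure.lintegral_bind (Kernel.aemeasurable _) measurable_edist.aemeasurable
      _ ≤ ∫⁻ x, (∫⁻ y, edist x y ∂κ₁ x + ∫⁻ y, edist x y ∂κ₂ x) ∂m := lintegral_mono fun x ↦ by
          simpa only [hfst, hsnd] using transportCost_le_lintegral_fst_add_snd ((κ₁ ×ₖ κ₂) x) x
      _ = ∫⁻ x, ∫⁻ y, edist x y ∂κ₁ x ∂m + ∫⁻ x, ∫⁻ y, edist x y ∂κ₂ x ∂m :=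
          lintegral_add_left (measurable_edist.lintegral_kernel_prod_right' (κ := κ₁)) _
      _ ≤ transportCost ρ + transportCost γ₂ :=
          add_le_add (Measure.lintegral_lintegral_condKernel_le hρ measurable_edist)
            (Measure.lintegral_lintegral_condKernel_le h₂ measurable_edist)
      _ = transportCost γ₁ + transportCost γ₂ := by rw [transportCost_map_swap]

end TransportCost

section GeneralizedWasserstein

variable {X : Type*} [PseudoEMetricSpace X] [MeasurableSpace X]

lemma dGW_le_of_coupling (μ ν : Measure X) (η : Measure (X × X)) :
    dGW μ ν ≤ tvDist μ η.fst + transportCost η + tvDist ν η.snd :=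
  (iInf₂_le η.fst η.snd).trans <| (iInf_le _ (by rw [Measure.fst_univ, Measure.snd_univ])).trans <|
    by gcongr; exact W1_fst_snd_le_transportCost η

variable [OpensMeasurableSpace X] [SecondCountableTopology X] [StandardBorelSpace X]
  (μ₁ μ₂ μ₃ : Measure X) [IsFiniteMeasure μ₁] [IsFiniteMeasure μ₂] [IsFiniteMeasure μ₃]

lemma dGW_le_of_couplings (γ₁ γ₂ : Measure (X × X)) [IsFiniteMeasure γ₁] [IsFiniteMeasure γ₂] :
    dGW μ₁ μ₃ ≤ (tvDist μ₁ γ₁.fst + transportCost γ₁ + tvDist μ₂ γ₁.snd) +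
      (tvDist μ₂ γ₂.fst + transportCost γ₂ + tvDist μ₃ γ₂.snd) := by
  obtain ⟨m, hm₁, hm₂⟩ := Measure.exists_sub_add_eq_and_sub_add_eq γ₁.snd γ₂.fst
  have hm_le₁ : m ≤ γ₁.snd := hm₁ ▸ Measure.le_add_left le_rfl
  have hm_le₂ : m ≤ γ₂.fst := hm₂ ▸ Measure.le_add_left le_rfl
  have : IsFiniteMeasure m := isFiniteMeasure_of_le _ hm_le₁
  have hloss {μ ν : Measure X} (h : μ - ν + m = μ) : μ .univ - m .univ = (μ - ν) .univ := by
    nth_rewrite 1 [← h]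
    rw [Measure.coe_add, Pi.add_apply, ENNReal.add_sub_cancel_right (measure_ne_top m _)]
  obtain ⟨η, hη₁, hη₂, hηm, hηc⟩ := exists_glue_transportCost_le γ₁ γ₂ hm_le₁ hm_le₂
  have hd₁ : γ₁.fst .univ - η.fst .univ = (γ₁.snd - γ₂.fst) .univ := by
    rw [Measure.fst_univ, Measure.fst_univ, hηm, ← Measure.snd_univ, hloss hm₁]
  have hd₂ : γ₂.snd .univ - η.snd .univ = (γ₂.fst - γ₁.snd) .univ := by
    rw [Measure.snd_univ, Measure.snd_univ, hηm, ← Measure.fst_univ, hloss hm₂]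
  calc dGW μ₁ μ₃ ≤ tvDist μ₁ η.fst + transportCost η + tvDist μ₃ η.snd := dGW_le_of_coupling _ _ η
    _ ≤ (tvDist μ₁ γ₁.fst + (γ₁.snd - γ₂.fst) .univ) + (transportCost γ₁ + transportCost γ₂) +
        (tvDist μ₃ γ₂.snd + (γ₂.fst - γ₁.snd) .univ) := by
      gcongr
      · exact hd₁ ▸ tvDist_le_add_of_le μ₁ hη₁
      · exact hd₂ ▸ tvDist_le_add_of_le μ₃ hη₂
    _ = tvDist μ₁ γ₁.fst + transportCost γ₁ + tvDist γ₁.snd γ₂.fst + transportCost γ₂ +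
        tvDist μ₃ γ₂.snd := by rw [tvDist.eq_1 γ₁.snd]; ring
    _ ≤ tvDist μ₁ γ₁.fst + transportCost γ₁ + (tvDist μ₂ γ₁.snd + tvDist μ₂ γ₂.fst) +
        transportCost γ₂ + tvDist μ₃ γ₂.snd := by
      gcongr
      exact (tvDist_triangle _ μ₂ _).trans_eq (by rw [tvDist_comm])
    _ = _ := by ring

lemma dGW_le_add_of_mass_eq {z₁ z₂ w₁ w₂ : Measure X} (hz : z₁ .univ = z₂ .univ)
    (hw : w₁ .univ = w₂ .univ) :
    dGW μ₁ μ₃ ≤ (tvDist μ₁ z₁ + W1 z₁ z₂ + tvDist μ₂ z₂) +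
      (tvDist μ₂ w₁ + W1 w₁ w₂ + tvDist μ₃ w₂) := by
  rcases eq_or_ne (tvDist μ₂ z₂) ∞ with h | hz₂
  · simp [h]
  rcases eq_or_ne (tvDist μ₂ w₁) ∞ with h | hw₁
  · simp [h]
  have := isFiniteMeasure_of_tvDist_ne_top hz₂
  have := isFiniteMeasure_of_tvDist_ne_top hw₁
  have : IsFiniteMeasure z₁ := ⟨hz ▸ measure_lt_top z₂ _⟩
  simp only [W1, ENNReal.iInf_add, ENNReal.add_iInf, le_iInf_iff]
  intro γ₂ hγ₂ γ₁ hγ₁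
  obtain ⟨rfl : γ₁.fst = z₁, rfl : γ₁.snd = z₂⟩ := hγ₁
  obtain ⟨rfl : γ₂.fst = w₁, rfl : γ₂.snd = w₂⟩ := hγ₂
  have : IsFiniteMeasure γ₁ := ⟨by rw [← Measure.fst_univ]; exact measure_lt_top _ _⟩
  have : IsFiniteMeasure γ₂ := ⟨by rw [← Measure.fst_univ]; exact measure_lt_top _ _⟩
  exact dGW_le_of_couplings μ₁ μ₂ μ₃ γ₁ γ₂

end GeneralizedWasserstein

/-- The generalized Wasserstein distance satisfies the triangle inequality. -/
theorem dGW_triangle {X : Type*} [MetricSpace X] [CompactSpace X]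
    [MeasurableSpace X] [BorelSpace X]
    (μ₁ μ₂ μ₃ : Measure X)
    [IsFiniteMeasure μ₁] [IsFiniteMeasure μ₂] [IsFiniteMeasure μ₃] :
    dGW μ₁ μ₃ ≤ dGW μ₁ μ₂ + dGW μ₂ μ₃ := by
  rw [dGW.eq_1 μ₁ μ₂, dGW.eq_1 μ₂ μ₃]
  simp only [ENNReal.iInf_add, ENNReal.add_iInf, le_iInf_iff]
  exact fun w₁ w₂ hw z₁ z₂ hz ↦ dGW_le_add_of_mass_eq μ₁ μ₂ μ₃ hz hw
end

section
/- Let d ≥ 2 and K ≥ 2 be integers. Over all partitions a_1 + ... + a_p = l with 1 ≤ l ≤ d, a_i ≥ 1, 1 ≤ p ≤ min(l, K), the minimum of (d − a_1)·...·(d − a_p)·d^(K−p) over all valid l, p, and partitions with not all parts forcing the product to zero (i.e., each a_i ≤ d − 1 when l < d, or the partition has p ≥ 2 when l = d) equals (d − 1)·d^(K−2), attained at l = d, p = 2, (a_1, a_2) = (1, d−1). -/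
/-!
Write `l = a₁ + ⋯ + aₚ`. Peeling off one part at a time with `(x - s)·d ≤ x·(d - s)` for
`x ≤ d` gives `(d - l)·d^(p-1) ≤ ∏ (d - aᵢ)`. If `l < d` this already yields `d^(K-1)`.
If `l = d`, apply the same bound to all parts but the first: the others sum to `d - a₁`,
so the product is at least `(d - a₁)·a₁·d^(K-2)`, and `(d - x)·x ≥ d - 1` for `1 ≤ x < d`.
-/

lemma tsub_mul_le_mul_tsub {x d : ℕ} (s : ℕ) (hx : x ≤ d) : (x - s) * d ≤ x * (d - s) :=
  calc (x - s) * d = x * d - s * d := Nat.sub_mul _ _ _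
    _ ≤ x * d - x * s := Nat.sub_le_sub_left (by rw [mul_comm s]; gcongr) _
    _ = x * (d - s) := (Nat.mul_sub _ _ _).symm

lemma tsub_sum_mul_pow_le_prod_tsub (d : ℕ) :
    ∀ {p : ℕ} (a : Fin (p + 1) → ℕ), (d - ∑ i, a i) * d ^ p ≤ ∏ i, (d - a i)
  | 0, a => by simp
  | p + 1, a => by
    rw [Fin.sum_univ_succ, Fin.prod_univ_succ, Nat.sub_add_eq, pow_succ', ← mul_assoc]
    calc (d - a 0 - ∑ i : Fin (p + 1), a i.succ) * d * d ^ p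
        ≤ (d - a 0) * (d - ∑ i : Fin (p + 1), a i.succ) * d ^ p :=
          Nat.mul_le_mul_right _ (tsub_mul_le_mul_tsub _ (Nat.sub_le _ _))
      _ ≤ (d - a 0) * ∏ i : Fin (p + 1), (d - a i.succ) := by
          rw [mul_assoc]; gcongr; exact tsub_sum_mul_pow_le_prod_tsub d _

lemma tsub_sum_mul_pow_le_prod_tsub_mul_pow {d K p : ℕ} (a : Fin (p + 1) → ℕ) (hpK : p + 1 ≤ K) :
    (d - ∑ i, a i) * d ^ (K - 1) ≤ (∏ i, (d - a i)) * d ^ (K - (p + 1)) := by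
  rw [show K - 1 = p + (K - (p + 1)) by omega, pow_add, ← mul_assoc]
  gcongr
  exact tsub_sum_mul_pow_le_prod_tsub d a

lemma tsub_one_le_tsub_mul {d x : ℕ} (hx : 1 ≤ x) (hxd : x < d) : d - 1 ≤ (d - x) * x := by
  obtain ⟨y, rfl⟩ : ∃ y, x = y + 1 := ⟨x - 1, by omega⟩
  obtain ⟨z, rfl⟩ : ∃ z, d = y + 1 + z + 1 := ⟨d - y - 2, by omega⟩
  rw [show y + 1 + z + 1 - (y + 1) = z + 1 by omega, show y + 1 + z + 1 - 1 = y + z + 1 by omega]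
  nlinarith

lemma le_prod_tsub_mul_pow_of_sum_lt {d K p : ℕ} (a : Fin (p + 1) → ℕ) (hK : 2 ≤ K)
    (hpK : p + 1 ≤ K) (hsum : ∑ i, a i < d) :
    (d - 1) * d ^ (K - 2) ≤ (∏ i, (d - a i)) * d ^ (K - (p + 1)) :=
  calc (d - 1) * d ^ (K - 2) ≤ d * d ^ (K - 2) := by gcongr; exact Nat.sub_le _ _
    _ = d ^ (K - 1) := by rw [← pow_succ']; congr 1; omega
    _ ≤ (d - ∑ i, a i) * d ^ (K - 1) := Nat.le_mul_of_pos_left _ (by omega)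
    _ ≤ _ := tsub_sum_mul_pow_le_prod_tsub_mul_pow a hpK

lemma le_prod_tsub_mul_pow_of_sum_eq {d K p : ℕ} (a : Fin (p + 2) → ℕ) (hpK : p + 2 ≤ K)
    (ha : ∀ i, 1 ≤ a i) (hsum : ∑ i, a i = d) :
    (d - 1) * d ^ (K - 2) ≤ (∏ i, (d - a i)) * d ^ (K - (p + 2)) := by
  rw [Fin.sum_univ_succ] at hsum
  have htail_pos : 1 ≤ ∑ i : Fin (p + 1), a i.succ :=
    (ha 1).trans <| Finset.single_le_sum (f := fun i : Fin (p + 1) => a i.succ)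
      (fun _ _ => Nat.zero_le _) (Finset.mem_univ 0)
  have htail := tsub_sum_mul_pow_le_prod_tsub_mul_pow (d := d) (K := K - 1) (fun i => a i.succ)
    (by omega)
  rw [show d - ∑ i : Fin (p + 1), a i.succ = a 0 by omega,
    show K - 1 - 1 = K - 2 by omega, show K - 1 - (p + 1) = K - (p + 2) by omega] at htail
  rw [Fin.prod_univ_succ, mul_assoc]
  calc (d - 1) * d ^ (K - 2) ≤ (d - a 0) * a 0 * d ^ (K - 2) := by
        gcongr; exact tsub_one_le_tsub_mul (ha 0) (by omega)
    _ ≤ _ := by rw [mul_assoc]; gcongr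

/-- For `d ≥ 2` and `K ≥ 2`: over all partitions `a 0 + ... + a (p-1) = l` with
`1 ≤ l ≤ d`, `a i ≥ 1`, `1 ≤ p ≤ min l K`, and `p ≥ 2` when `l = d`
(each `a i ≤ d - 1` being automatic when `l < d`), the quantity
`(∏ i, (d - a i)) * d^(K - p)` is at least `(d - 1) * d^(K - 2)`, and this
value is attained at `l = d`, `p = 2`, `(a 0, a 1) = (1, d - 1)`. -/
theorem partition_product_min
    (d K : ℕ) (hd : 2 ≤ d) (hK : 2 ≤ K) :
    (∀ (l p : ℕ) (a : Fin p → ℕ),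
      1 ≤ l → l ≤ d → 1 ≤ p → p ≤ min l K →
      (∀ i, 1 ≤ a i) → (∑ i, a i = l) →
      (l = d → 2 ≤ p) →
      (d - 1) * d ^ (K - 2) ≤ (∏ i, (d - a i)) * d ^ (K - p)) ∧
    (∃ (l p : ℕ) (a : Fin p → ℕ),
      1 ≤ l ∧ l ≤ d ∧ 1 ≤ p ∧ p ≤ min l K ∧
      (∀ i, 1 ≤ a i) ∧ (∑ i, a i = l) ∧
      (l = d → 2 ≤ p) ∧
      (∏ i, (d - a i)) * d ^ (K - p) = (d - 1) * d ^ (K - 2)) := by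
  refine ⟨fun l p a _ hld hp hpK ha hsum hldp => ?_, ?_⟩
  · have hpK : p ≤ K := hpK.trans (min_le_right _ _)
    rcases hld.lt_or_eq with hlt | rfl
    · obtain ⟨q, rfl⟩ : ∃ q, p = q + 1 := ⟨p - 1, by omega⟩
      exact le_prod_tsub_mul_pow_of_sum_lt a hK hpK (hsum ▸ hlt)
    · obtain ⟨q, rfl⟩ : ∃ q, p = q + 2 := ⟨p - 2, by have := hldp rfl; omega⟩
      exact le_prod_tsub_mul_pow_of_sum_eq a hpK ha hsum
  · refine ⟨d, 2, ![1, d - 1], by omega, le_rfl, by omega, by omega, ?_, ?_, fun _ => le_rfl, ?_⟩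
    · intro i
      fin_cases i <;> simp; omega
    · simp only [Fin.sum_univ_two, Matrix.cons_val_zero, Matrix.cons_val_one]
      omega
    · simp only [Fin.prod_univ_two, Matrix.cons_val_zero, Matrix.cons_val_one,
        show d - (d - 1) = 1 by omega, mul_one]
end

section
/- Let μ = Σ_{k=1}^K a_k δ_{θ_k} be a nonnegative atomic measure on [0,1]^d with all a_k > 0 and Θ = {θ_1,...,θ_K} distinct points. Suppose Ψ : [0,1]^d → ℝ^N is continuous, the matrix [Ψ(θ_k)]_{k∈[K]} ∈ ℝ^{N×K} has full column rank, and there exists b ∈ ℝ^N with Q(θ) := ⟨b, Ψ(θ)⟩ ≥ 0 on [0,1]^d and Q(θ) = 0 exactly on Θ. Then μ is the unique nonnegative Borel measure ν on [0,1]^d satisfying ∫ Ψ dν = ∫ Ψ dμ. -/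
/-! The certificate `Q = ⟪b, Ψ ·⟫` integrates to `⟪b, ∫ Ψ dμ⟫ = 0` against any admissible `ν`;
being nonnegative on the cube and zero only on `Θ`, it forces `ν` to be carried by `Θ`, so
`ν = ∑ ν {θ k} • δ (θ k)`. Equality of the moments `∫ Ψ` then reads
`∑ (ν {θ k} - a k) • Ψ (θ k) = 0`, and linear independence makes the weights agree. -/

open MeasureTheory

/-- The unit cube `[0,1]^d` inside `ℝ^d`. -/
def unitCube (d : ℕ) : Set (EuclideanSpace ℝ (Fin d)) :=
  {x | ∀ i, x i ∈ Set.Icc (0 : ℝ) 1}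

open Set

open scoped ENNReal

lemma isCompact_unitCube (d : ℕ) : IsCompact (unitCube d) := by
  have h : unitCube d = (EuclideanSpace.equiv (Fin d) ℝ) ⁻¹' pi univ (fun _ => Icc (0 : ℝ) 1) := by
    ext x; exact mem_univ_pi.symm
  rw [h]
  exact (EuclideanSpace.equiv (Fin d) ℝ).toHomeomorph.isCompact_preimage.mpr
    (isCompact_univ_pi fun _ => isCompact_Icc)

lemma Continuous.integrable_of_ae_mem_isCompact {X E : Type*} [TopologicalSpace X] [T2Space X]
    [MeasurableSpace X] [OpensMeasurableSpace X] [NormedAddCommGroup E] {f : X → E}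
    (hf : Continuous f) {s : Set X} (hs : IsCompact s) {ν : Measure X} [IsFiniteMeasure ν]
    (hν : ∀ᵐ x ∂ν, x ∈ s) : Integrable f ν := by
  rw [← Measure.restrict_eq_self_of_ae_mem hν]
  exact hf.continuousOn.integrableOn_compact hs

lemma ae_mem_of_integral_eq_zero {X : Type*} [MeasurableSpace X] {ν : Measure X} {f : X → ℝ}
    {s t : Set X} (hf : Integrable f ν) (hs : ∀ᵐ x ∂ν, x ∈ s) (hf_nonneg : ∀ x ∈ s, 0 ≤ f x)
    (hf_zero : ∀ x ∈ s, f x = 0 → x ∈ t) (h : ∫ x, f x ∂ν = 0) : ∀ᵐ x ∂ν, x ∈ t := by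
  have hf_ae : f =ᵐ[ν] 0 :=
    (integral_eq_zero_iff_of_nonneg_ae (hs.mono hf_nonneg) hf).mp h
  filter_upwards [hs, hf_ae] with x hxs hx using hf_zero x hxs hx

section DiracSum

variable {X E ι : Type*} [MeasurableSpace X] [MeasurableSingletonClass X]
  [NormedAddCommGroup E] [NormedSpace ℝ E] [CompleteSpace E] [Fintype ι]

lemma integral_sum_smul_dirac (f : X → E) (x : ι → X) {c : ι → ℝ≥0∞} (hc : ∀ i, c i ≠ ∞) :
    ∫ y, f y ∂(∑ i, c i • Measure.dirac (x i)) = ∑ i, (c i).toReal • f (x i) := by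
  rw [integral_finsetSum_measure fun i _ => (integrable_dirac enorm_lt_top).smul_measure (hc i)]
  simp only [integral_smul_measure, integral_dirac]

lemma eq_sum_smul_dirac_of_ae_mem_range {x : ι → X} (hx : Function.Injective x) {ν : Measure X}
    (hν : ∀ᵐ y ∂ν, y ∈ range x) : ν = ∑ i, ν {x i} • Measure.dirac (x i) := by
  classical
  have hν' : ∀ᵐ y ∂ν, y ∈ Finset.univ.image x := by simpa using hν
  calc ν = ∑ y ∈ Finset.univ.image x, ν {y} • Measure.dirac y := Measure.ae_mem_finset_iff.mp hν'
    _ = ∑ i, ν {x i} • Measure.dirac (x i) := Finset.sum_image fun i _ j _ h => hx h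

lemma eq_sum_smul_dirac_of_integral_eq {Ψ : X → E} {x : ι → X}
    (hΨ : LinearIndependent ℝ (fun i => Ψ (x i))) {ν : Measure X} [IsFiniteMeasure ν]
    (hν : ∀ᵐ y ∂ν, y ∈ range x) {c : ι → ℝ≥0∞} (hc : ∀ i, c i ≠ ∞)
    (h : ∫ y, Ψ y ∂ν = ∫ y, Ψ y ∂(∑ i, c i • Measure.dirac (x i))) :
    ν = ∑ i, c i • Measure.dirac (x i) := by
  have hν_eq := eq_sum_smul_dirac_of_ae_mem_range hΨ.injective.of_comp hν
  rw [hν_eq, integral_sum_smul_dirac _ _ fun i => measure_ne_top ν _,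
    integral_sum_smul_dirac _ _ hc] at h
  have hcoef := Fintype.linearIndependent_iffₛ.mp hΨ _ _ h
  rw [hν_eq]
  refine Finset.sum_congr rfl fun i _ => ?_
  rw [(ENNReal.toReal_eq_toReal_iff' (measure_ne_top ν _) (hc i)).mp (hcoef i)]

end DiracSum

theorem sparse_measure_unique_general
    {d N K : ℕ} (θ : Fin K → EuclideanSpace ℝ (Fin d))
    (hθcube : ∀ k, θ k ∈ unitCube d)
    (a : Fin K → ℝ)
    (Ψ : EuclideanSpace ℝ (Fin d) → EuclideanSpace ℝ (Fin N))
    (hΨ : Continuous Ψ)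
    (hrank : LinearIndependent ℝ (fun k => Ψ (θ k)))
    (b : EuclideanSpace ℝ (Fin N))
    (hQ0 : ∀ x ∈ unitCube d, (0 : ℝ) ≤ inner ℝ b (Ψ x))
    (hQvanish : ∀ x ∈ unitCube d, (inner ℝ b (Ψ x) = (0 : ℝ) ↔ ∃ k, x = θ k)) :
    ∀ ν : Measure (EuclideanSpace ℝ (Fin d)), IsFiniteMeasure ν →
      ν (unitCube d)ᶜ = 0 →
      (∫ x, Ψ x ∂ν) = (∫ x, Ψ x ∂(∑ k, ENNReal.ofReal (a k) • Measure.dirac (θ k))) →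
      ν = ∑ k, ENNReal.ofReal (a k) • Measure.dirac (θ k) := by
  intro ν _ hνcube hint
  have hcube : ∀ᵐ x ∂ν, x ∈ unitCube d := ae_iff.mpr hνcube
  have hΨν : Integrable Ψ ν := hΨ.integrable_of_ae_mem_isCompact (isCompact_unitCube d) hcube
  have hQν : ∫ x, inner ℝ b (Ψ x) ∂ν = 0 := by
    rw [integral_inner hΨν, hint, integral_sum_smul_dirac _ _ fun _ => ENNReal.ofReal_ne_top,
      inner_sum]
    refine Finset.sum_eq_zero fun k _ => ?_
    rw [inner_smul_right, (hQvanish _ (hθcube k)).mpr ⟨k, rfl⟩, mul_zero]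
  have hsupp : ∀ᵐ x ∂ν, x ∈ range θ :=
    ae_mem_of_integral_eq_zero (hΨν.const_inner b) hcube hQ0
      (fun x hx hQx => by obtain ⟨k, rfl⟩ := (hQvanish x hx).mp hQx; exact mem_range_self k) hQν
  exact eq_sum_smul_dirac_of_integral_eq hrank hsupp (fun _ => ENNReal.ofReal_ne_top) hint

/-- Uniqueness of the sparse measure: let `μ = Σ_k a_k δ_{θ_k}` with `a_k > 0`
and distinct `θ_k ∈ [0,1]^d`. Suppose `Ψ : [0,1]^d → ℝ^N` is continuous, the
vectors `Ψ(θ_k)` are linearly independent (full column rank), and there is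
`b ∈ ℝ^N` with `Q θ = ⟨b, Ψ θ⟩ ≥ 0` on `[0,1]^d`, vanishing exactly on
`{θ_1, ..., θ_K}`. Then `μ` is the unique nonnegative (finite) Borel measure
`ν` supported on `[0,1]^d` with `∫ Ψ dν = ∫ Ψ dμ`. -/
theorem sparse_measure_unique
    {d N K : ℕ} (θ : Fin K → EuclideanSpace ℝ (Fin d))
    (hθdist : Function.Injective θ)
    (hθcube : ∀ k, θ k ∈ unitCube d)
    (a : Fin K → ℝ) (ha : ∀ k, 0 < a k)
    (Ψ : EuclideanSpace ℝ (Fin d) → EuclideanSpace ℝ (Fin N))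
    (hΨ : Continuous Ψ)
    (hrank : LinearIndependent ℝ (fun k => Ψ (θ k)))
    (b : EuclideanSpace ℝ (Fin N))
    (hQ0 : ∀ x ∈ unitCube d, (0 : ℝ) ≤ inner ℝ b (Ψ x))
    (hQvanish : ∀ x ∈ unitCube d, (inner ℝ b (Ψ x) = (0 : ℝ) ↔ ∃ k, x = θ k)) :
    ∀ ν : Measure (EuclideanSpace ℝ (Fin d)), IsFiniteMeasure ν →
      ν (unitCube d)ᶜ = 0 →
      (∫ x, Ψ x ∂ν) = (∫ x, Ψ x ∂(∑ k, ENNReal.ofReal (a k) • Measure.dirac (θ k))) →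
      ν = ∑ k, ENNReal.ofReal (a k) • Measure.dirac (θ k) :=
  sparse_measure_unique_general θ hθcube a Ψ hΨ hrank b hQ0 hQvanish
end
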